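/- arXiv:2304.03452 — 3 statements merged into one kernel-verified Lean document; each statement's English description precedes it below -/
import Mathlib

section
/- Let M ∈ ℝ^{q×q} be a substochastic matrix (nonnegative with all row sums at most 1). Suppose that for every non-sink row i (i.e., every row with Σ_j M_{ij} = 1) there exist m ≥ 1 and a sink row k* (i.e., Σ_j M_{k*j} < 1) with (M^m)_{i k*} > 0. Then M is convergent: lim_{t→∞} M^t = 0. -/
section aux

variable {q : ℕ} (M : Matrix (Fin q) (Fin q) ℝ)

private lemma pow_entry_nonneg (hM : ∀ i j, 0 ≤ M i j) :
    ∀ n i j, 0 ≤ (M ^ n) i j := by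
  intro n
  induction n with
  | zero => intro i j; simp [Matrix.one_apply]; positivity
  | succ n ih =>
    intro i j
    rw [pow_succ, Matrix.mul_apply]
    exact Finset.sum_nonneg fun k _ => mul_nonneg (ih i k) (hM k j)

private lemma S_add (a b : ℕ) (i : Fin q) :
    ∑ j, (M ^ (a + b)) i j = ∑ k, (M ^ a) i k * ∑ j, (M ^ b) k j := by
  simp only [pow_add, Matrix.mul_apply, Finset.mul_sum]
  rw [Finset.sum_comm]

private lemma S_le_one (hM : ∀ i j, 0 ≤ M i j) (hrow : ∀ i, ∑ j, M i j ≤ 1) :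
    ∀ n i, ∑ j, (M ^ n) i j ≤ 1 := by
  intro n
  induction n with
  | zero => intro i; simp [Matrix.one_apply]
  | succ n ih =>
    intro i
    have : (n + 1) = n + 1 := rfl
    rw [S_add M n 1]
    calc ∑ k, (M ^ n) i k * ∑ j, (M ^ 1) k j
        ≤ ∑ k, (M ^ n) i k * 1 := by
          apply Finset.sum_le_sum
          intro k _
          exact mul_le_mul_of_nonneg_left (by simpa using hrow k) (pow_entry_nonneg M hM n i k)
      _ = ∑ k, (M ^ n) i k := by simp
      _ ≤ 1 := ih i

private lemma S_anti (hM : ∀ i j, 0 ≤ M i j) (hrow : ∀ i, ∑ j, M i j ≤ 1) :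
    ∀ a b, a ≤ b → ∀ i, ∑ j, (M ^ b) i j ≤ ∑ j, (M ^ a) i j := by
  intro a b hab
  induction b with
  | zero => intro i; interval_cases a; exact le_rfl
  | succ n ih =>
    intro i
    rcases Nat.lt_or_ge a (n + 1) with h | h
    · have h1 : a ≤ n := Nat.lt_succ_iff.mp h
      calc ∑ j, (M ^ (n + 1)) i j
          ≤ ∑ j, (M ^ n) i j := by
            rw [S_add M n 1]
            calc ∑ k, (M ^ n) i k * ∑ j, (M ^ 1) k j
                ≤ ∑ k, (M ^ n) i k * 1 := Finset.sum_le_sum fun k _ =>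
                  mul_le_mul_of_nonneg_left (by simpa using hrow k) (pow_entry_nonneg M hM n i k)
              _ = ∑ k, (M ^ n) i k := by simp
        _ ≤ ∑ j, (M ^ a) i j := ih h1 i
    · have : a = n + 1 := le_antisymm hab h
      subst this; exact le_rfl

end aux

/-- Let `M` be a substochastic matrix (nonnegative with all row sums at most `1`). If for
every non-sink row `i` (row sum equal to `1`) there exist `m ≥ 1` and a sink row `k*`
(row sum strictly less than `1`) with `(M^m)_{i k*} > 0`, then `M` is convergent:
`M^t → 0` as `t → ∞`. -/
theorem stmt_7 {q : ℕ} (M : Matrix (Fin q) (Fin q) ℝ)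
    (hM : ∀ i j, 0 ≤ M i j) (hrow : ∀ i, ∑ j, M i j ≤ 1)
    (hreach : ∀ i : Fin q, ∑ j, M i j = 1 →
      ∃ (m : ℕ) (kstar : Fin q), 1 ≤ m ∧ ∑ j, M kstar j < 1 ∧ 0 < (M ^ m) i kstar) :
    Filter.Tendsto (fun t : ℕ => M ^ t) Filter.atTop (nhds 0) := by
  rcases Nat.eq_zero_or_pos q with hq | hq
  · subst hq
    haveI : IsEmpty (Fin 0) := inferInstance
    have : (fun t : ℕ => M ^ t) = fun _ => (0 : Matrix (Fin 0) (Fin 0) ℝ) := by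
      funext t
      exact Subsingleton.elim _ _
    rw [this]
    exact tendsto_const_nhds
  -- For each i, find n ≥ 1 with row sum of M^n at i < 1
  have key : ∀ i : Fin q, ∃ n : ℕ, 1 ≤ n ∧ ∑ j, (M ^ n) i j < 1 := by
    intro i
    rcases lt_or_eq_of_le (hrow i) with h | h
    · exact ⟨1, le_rfl, by simpa using h⟩
    · obtain ⟨m, kstar, hm, hk, hpos⟩ := hreach i h
      refine ⟨m + 1, by omega, ?_⟩
      rw [S_add M m 1]
      have hlt : ∑ k, (M ^ m) i k * ∑ j, (M ^ 1) k j < ∑ k, (M ^ m) i k * 1 := by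
        apply Finset.sum_lt_sum
        · intro k _
          exact mul_le_mul_of_nonneg_left (by simpa using hrow k) (pow_entry_nonneg M hM m i k)
        · exact ⟨kstar, Finset.mem_univ _, by
            simp only [pow_one, mul_one]
            exact mul_lt_of_lt_one_right hpos hk⟩
      calc ∑ k, (M ^ m) i k * ∑ j, (M ^ 1) k j
          < ∑ k, (M ^ m) i k * 1 := hlt
        _ = ∑ k, (M ^ m) i k := by simp
        _ ≤ 1 := S_le_one M hM hrow m i
  choose n hn1 hnlt using key
  set N : ℕ := Finset.univ.sup n ⊔ 1 with hN
  have hN1 : 1 ≤ N := le_sup_right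
  have hSN : ∀ i, ∑ j, (M ^ N) i j < 1 := fun i =>
    lt_of_le_of_lt
      (S_anti M hM hrow (n i) N (le_sup_of_le_left (Finset.le_sup (Finset.mem_univ i))) i)
      (hnlt i)
  haveI : Nonempty (Fin q) := ⟨⟨0, hq⟩⟩
  set c : ℝ := Finset.univ.sup' Finset.univ_nonempty (fun i => ∑ j, (M ^ N) i j) with hc
  have hc1 : c < 1 := by
    rw [hc, Finset.sup'_lt_iff]
    exact fun i _ => hSN i
  have hcS : ∀ i, ∑ j, (M ^ N) i j ≤ c := by
    intro i
    rw [hc]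
    exact Finset.le_sup' (fun i => ∑ j, (M ^ N) i j) (Finset.mem_univ i)
  have hc0 : 0 ≤ c := by
    refine le_trans ?_ (hcS (Classical.arbitrary _))
    exact Finset.sum_nonneg fun j _ => pow_entry_nonneg M hM N _ j
  -- S (k*N) i ≤ c^k
  have hpow : ∀ k : ℕ, ∀ i, ∑ j, (M ^ (k * N)) i j ≤ c ^ k := by
    intro k
    induction k with
    | zero => intro i; simp [Matrix.one_apply]
    | succ k ih =>
      intro i
      have : (k + 1) * N = k * N + N := by ring
      rw [this, S_add M (k * N) N]
      calc ∑ k', (M ^ (k * N)) i k' * ∑ j, (M ^ N) k' j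
          ≤ ∑ k', (M ^ (k * N)) i k' * c := Finset.sum_le_sum fun k' _ =>
            mul_le_mul_of_nonneg_left (hcS k') (pow_entry_nonneg M hM _ i k')
        _ = (∑ k', (M ^ (k * N)) i k') * c := by rw [Finset.sum_mul]
        _ ≤ c ^ k * c := mul_le_mul_of_nonneg_right (ih i) hc0
        _ = c ^ (k + 1) := by ring
  -- bound: S t i ≤ c^(t/N)
  have hbound : ∀ t : ℕ, ∀ i j, (M ^ t) i j ≤ c ^ (t / N) := by
    intro t i j
    have h1 : (M ^ t) i j ≤ ∑ j', (M ^ t) i j' :=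
      Finset.single_le_sum (fun j' _ => pow_entry_nonneg M hM t i j') (Finset.mem_univ j)
    have h2 : (t / N) * N ≤ t := Nat.div_mul_le_self t N
    calc (M ^ t) i j ≤ ∑ j', (M ^ t) i j' := h1
      _ ≤ ∑ j', (M ^ ((t / N) * N)) i j' := S_anti M hM hrow _ t h2 i
      _ ≤ c ^ (t / N) := hpow _ i
  have hdiv : Filter.Tendsto (fun t : ℕ => t / N) Filter.atTop Filter.atTop := by
    apply Filter.tendsto_atTop_atTop.2
    intro b
    refine ⟨b * N, fun a ha => ?_⟩
    exact (Nat.le_div_iff_mul_le (by omega)).2 ha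
  have hgeo : Filter.Tendsto (fun t : ℕ => c ^ (t / N)) Filter.atTop (nhds 0) :=
    (tendsto_pow_atTop_nhds_zero_of_lt_one hc0 hc1).comp hdiv
  rw [show (0 : Matrix (Fin q) (Fin q) ℝ) = fun _ _ => (0:ℝ) from rfl]
  apply tendsto_pi_nhds.2
  intro i
  apply tendsto_pi_nhds.2
  intro j
  exact squeeze_zero (fun t => pow_entry_nonneg M hM t i j) (fun t => hbound t i j) hgeo
end

section
/- Let W be a nonnegative square real matrix all of whose row sums equal 1 (a row-stochastic matrix), and suppose additionally that every diagonal entry of W is strictly positive. Then the matrix powers W^t converge entrywise as t → ∞; in particular, for every vector x, the power iteration W^t x converges deterministically. -/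
/-!
Complexify `W`. It is a contraction for the sup norm, so its powers are bounded, and by
Gershgorin every eigenvalue lies in a disc with centre some `W k k > 0` and radius `1 - W k k`,
which meets the unit circle only at `1`. On a generalized eigenspace with `‖μ‖ < 1` the binomial
expansion of `(μ + N) ^ t`, `N` nilpotent, tends to `0`; on the one for `μ = 1` boundedness of the
powers rules out nontrivial Jordan blocks, so `W` fixes it pointwise. As `ℂⁿ` is the sum of the
generalized eigenspaces, every orbit `W ^ t v` converges, hence so do the columns of `W ^ t`.
-/

open scoped Matrix
open Filter Topology

theorem tendsto_choose_mul_pow_sub_atTop_zero {𝕜 : Type*} [NormedField 𝕜] (j : ℕ) {μ : 𝕜}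
    (hμ : ‖μ‖ < 1) : Tendsto (fun t : ℕ => (t.choose j : 𝕜) * μ ^ (t - j)) atTop (𝓝 0) := by
  have hreal : Tendsto (fun t : ℕ => (t.choose j : ℝ) * ‖μ‖ ^ (t - j)) atTop (𝓝 0) := by
    rw [← tendsto_add_atTop_iff_nat j]
    have hsum := summable_choose_mul_geometric_of_norm_lt_one (r := ‖μ‖) j (by rwa [norm_norm])
    simpa only [Nat.add_sub_cancel] using hsum.tendsto_atTop_zero
  refine squeeze_zero_norm (fun t => ?_) hreal
  rw [norm_mul, norm_pow]
  gcongr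
  simpa using Nat.norm_cast_le (α := 𝕜) (t.choose j)

namespace Module.End

variable {𝕜 E : Type*}

theorem tendsto_pow_apply_zero_of_mem_maxGenEigenspace [NormedField 𝕜] [NormedAddCommGroup E]
    [NormedSpace 𝕜 E] (f : End 𝕜 E) {μ : 𝕜} (hμ : ‖μ‖ < 1) {v : E}
    (hv : v ∈ f.maxGenEigenspace μ) : Tendsto (fun t : ℕ => (f ^ t) v) atTop (𝓝 0) := by
  obtain ⟨k, hk⟩ := (f.mem_maxGenEigenspace μ v).mp hv
  set N := f - μ • (1 : End 𝕜 E)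
  have hN : ∀ j, k ≤ j → (N ^ j) v = 0 := fun j hj => by
    rw [← Nat.sub_add_cancel hj, pow_add, mul_apply, hk, map_zero]
  have binomial : ∀ t, (f ^ t) v =
      ∑ j ∈ Finset.range (t + 1), ((t.choose j : 𝕜) * μ ^ (t - j)) • (N ^ j) v := by
    intro t
    rw [← sub_add_cancel f (μ • 1), ((Commute.one_right N).smul_right μ).add_pow,
      LinearMap.coe_sum, Finset.sum_apply]
    refine Finset.sum_congr rfl fun j _ => ?_
    simp only [smul_pow, one_pow, mul_apply, natCast_apply, LinearMap.smul_apply, one_apply,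
      map_smul, ← Nat.cast_smul_eq_nsmul 𝕜, smul_smul]
  have truncated : ∀ᶠ t in atTop, (f ^ t) v =
      ∑ j ∈ Finset.range k, ((t.choose j : 𝕜) * μ ^ (t - j)) • (N ^ j) v := by
    filter_upwards [eventually_ge_atTop k] with t ht
    rw [binomial, eq_comm]
    refine Finset.sum_subset (Finset.range_subset_range.mpr (by omega)) fun j _ hj => ?_
    rw [hN j (by simpa using hj), smul_zero]
  refine Tendsto.congr' (EventuallyEq.symm truncated) ?_
  simpa using tendsto_finsetSum (Finset.range k) fun j _ =>
    (tendsto_choose_mul_pow_sub_atTop_zero j hμ).smul_const ((N ^ j) v)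

theorem norm_pow_apply_le [SeminormedAddCommGroup E] [Semiring 𝕜] [Module 𝕜 E] {f : End 𝕜 E}
    (hf : ∀ v, ‖f v‖ ≤ ‖v‖) (t : ℕ) (v : E) : ‖(f ^ t) v‖ ≤ ‖v‖ := by
  induction t with
  | zero => simp
  | succ t ih => rw [pow_succ', mul_apply]; exact (hf _).trans ih

theorem apply_eq_self_of_mem_maxGenEigenspace_one [RCLike 𝕜] [NormedAddCommGroup E]
    [NormedSpace 𝕜 E] {f : End 𝕜 E} (hf : ∀ v, ‖f v‖ ≤ ‖v‖) {v : E}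
    (hv : v ∈ f.maxGenEigenspace 1) : f v = v := by
  obtain ⟨k, hk⟩ := (f.mem_maxGenEigenspace 1 v).mp hv
  rw [one_smul] at hk
  clear hv
  induction k generalizing v with
  | zero => simp_all
  | succ k ih =>
    set u := (f - 1) v with hu
    have hfu : f u = u := ih (by rwa [hu, ← mul_apply, ← pow_succ])
    have hfv : f v = v + u := by simp [hu]
    -- a Jordan chain `f v = v + u`, `f u = u` has orbit `v + t • u`, unbounded unless `u = 0`
    have orbit : ∀ t : ℕ, (f ^ t) v = v + (t : 𝕜) • u := by
      intro t
      induction t with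
      | zero => simp
      | succ t iht =>
        rw [pow_succ', mul_apply, iht, map_add, map_smul, hfv, hfu]
        push_cast
        module
    have bound : ∀ t : ℕ, (t : ℝ) * ‖u‖ ≤ 2 * ‖v‖ := fun t => by
      have h := norm_pow_apply_le hf t v
      rw [orbit] at h
      have := norm_sub_le (v + (t : 𝕜) • u) v
      rw [add_sub_cancel_left, norm_smul, RCLike.norm_natCast] at this
      linarith
    have hu0 : u = 0 := by
      by_contra hu0
      obtain ⟨t, ht⟩ := exists_nat_gt (2 * ‖v‖ / ‖u‖)
      rw [div_lt_iff₀ (norm_pos_iff.mpr hu0)] at ht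
      linarith [bound t]
    rw [hfv, hu0, add_zero]

theorem exists_tendsto_pow_apply [NormedAddCommGroup E] [NormedSpace ℂ E]
    [FiniteDimensional ℂ E] {f : End ℂ E} (hf : ∀ v, ‖f v‖ ≤ ‖v‖)
    (hspec : ∀ μ, f.HasEigenvalue μ → μ = 1 ∨ ‖μ‖ < 1) (v : E) :
    ∃ y, Tendsto (fun t : ℕ => (f ^ t) v) atTop (𝓝 y) := by
  have hv : v ∈ ⨆ μ, f.maxGenEigenspace μ := by
    rw [iSup_maxGenEigenspace_eq_top]; trivial
  induction hv using Submodule.iSup_induction' with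
  | mem μ w hw =>
    obtain rfl | hw0 := eq_or_ne w 0
    · exact ⟨0, by simp⟩
    have hμ : f.HasEigenvalue μ :=
      HasUnifEigenvalue.lt (k := ⊤) (by norm_num) fun h =>
        hw0 ((Submodule.mem_bot ℂ).mp (h ▸ hw))
    obtain rfl | hlt := hspec μ hμ
    · have hfix := apply_eq_self_of_mem_maxGenEigenspace_one hf hw
      exact ⟨w, by simp only [coe_pow, (Function.IsFixedPt.iterate hfix _).eq, tendsto_const_nhds]⟩
    · exact ⟨0, tendsto_pow_apply_zero_of_mem_maxGenEigenspace f hlt hw⟩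
  | zero => exact ⟨0, by simp⟩
  | add w₁ w₂ _ _ h₁ h₂ =>
    obtain ⟨y₁, h₁⟩ := h₁
    obtain ⟨y₂, h₂⟩ := h₂
    exact ⟨y₁ + y₂, by simpa using h₁.add h₂⟩

end Module.End

theorem Complex.norm_lt_one_of_norm_sub_ofReal_le {d : ℝ} (hd : 0 < d) {μ : ℂ}
    (h : ‖μ - d‖ ≤ 1 - d) (hμ : μ ≠ 1) : ‖μ‖ < 1 := by
  have h2 : ‖μ - d‖ ^ 2 ≤ (1 - d) ^ 2 := pow_le_pow_left₀ (norm_nonneg _) h 2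
  rw [Complex.sq_norm, Complex.normSq_apply] at h2
  have hnorm : ‖μ‖ ^ 2 = μ.re ^ 2 + μ.im ^ 2 := by
    rw [Complex.sq_norm, Complex.normSq_apply]; ring
  simp only [Complex.sub_re, Complex.ofReal_re, Complex.sub_im, Complex.ofReal_im,
    sub_zero] at h2
  have hd1 : d ≤ 1 := by linarith [norm_nonneg (μ - d)]
  have hre : μ.re < 1 := by
    by_contra! hre
    have hsum : (μ.re - 1) ^ 2 + μ.im ^ 2 ≤ 0 := by
      nlinarith [mul_nonneg (sub_nonneg.2 hre) (sub_nonneg.2 hd1)]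
    have hre1 : (μ.re - 1) ^ 2 = 0 := by nlinarith [sq_nonneg (μ.re - 1), sq_nonneg μ.im]
    have him : μ.im ^ 2 = 0 := by nlinarith [sq_nonneg (μ.re - 1), sq_nonneg μ.im]
    exact hμ (Complex.ext (by simpa [sub_eq_zero] using hre1) (by simpa using him))
  have : ‖μ‖ ^ 2 < 1 := by nlinarith [mul_pos hd (sub_pos.2 hre)]
  nlinarith [norm_nonneg μ]

theorem Matrix.exists_tendsto_of_forall_exists_tendsto_mulVec {ι m n R : Type*} [Fintype n]
    [DecidableEq n] [NonAssocSemiring R] [TopologicalSpace R] {l : Filter ι}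
    {M : ι → Matrix m n R} (h : ∀ v, ∃ y, Tendsto (fun t => M t *ᵥ v) l (𝓝 y)) :
    ∃ L, Tendsto M l (𝓝 L) := by
  choose y hy using fun j => h (Pi.single j 1)
  refine ⟨Matrix.of fun i j => y j i, tendsto_pi_nhds.mpr fun i => tendsto_pi_nhds.mpr fun j => ?_⟩
  simpa [Matrix.mulVec_single_one] using tendsto_pi_nhds.mp (hy j) i

namespace Matrix

variable {n : Type*} [Fintype n] [DecidableEq n] {W : Matrix n n ℝ}

theorem norm_map_ofReal_mulVec_le (hW : W ∈ rowStochastic ℝ n) (v : n → ℂ) :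
    ‖W.map (↑) *ᵥ v‖ ≤ ‖v‖ := by
  refine (pi_norm_le_iff_of_nonneg (norm_nonneg v)).mpr fun i => ?_
  calc ‖∑ j, (W i j : ℂ) * v j‖ ≤ ∑ j, W i j * ‖v j‖ := by
        refine (norm_sum_le _ _).trans_eq (Finset.sum_congr rfl fun j _ => ?_)
        rw [norm_mul, Complex.norm_real, Real.norm_of_nonneg (nonneg_of_mem_rowStochastic hW)]
    _ ≤ ∑ j, W i j * ‖v‖ := by
        gcongr with j
        · exact nonneg_of_mem_rowStochastic hW
        · exact norm_le_pi_norm v j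
    _ = ‖v‖ := by rw [← Finset.sum_mul, sum_row_of_mem_rowStochastic hW, one_mul]

theorem eq_one_or_norm_lt_one_of_hasEigenvalue (hW : W ∈ rowStochastic ℝ n)
    (hdiag : ∀ i, 0 < W i i) {μ : ℂ} (hμ : Module.End.HasEigenvalue (toLin' (W.map (↑))) μ) :
    μ = 1 ∨ ‖μ‖ < 1 := by
  obtain ⟨k, hk⟩ := eigenvalue_mem_ball hμ
  have hradius : ∑ j ∈ Finset.univ.erase k, ‖(W.map (↑) k j : ℂ)‖ = 1 - W k k := by
    rw [← sum_row_of_mem_rowStochastic hW k, ← Finset.add_sum_erase _ _ (Finset.mem_univ k),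
      add_sub_cancel_left]
    refine Finset.sum_congr rfl fun j _ => ?_
    rw [map_apply, Complex.norm_real, Real.norm_of_nonneg (nonneg_of_mem_rowStochastic hW)]
  rw [Metric.mem_closedBall, hradius, dist_eq_norm, map_apply] at hk
  exact or_iff_not_imp_left.mpr (Complex.norm_lt_one_of_norm_sub_ofReal_le (hdiag k) hk)

theorem exists_tendsto_pow_of_mem_rowStochastic (hW : W ∈ rowStochastic ℝ n)
    (hdiag : ∀ i, 0 < W i i) : ∃ L, Tendsto (fun t : ℕ => W ^ t) atTop (𝓝 L) := by
  have hpow : ∀ t : ℕ, (W ^ t).map (↑) = (W.map (↑) : Matrix n n ℂ) ^ t := fun t =>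
    Complex.ofRealHom.mapMatrix.map_pow W t
  obtain ⟨L, hL⟩ : ∃ L, Tendsto (fun t : ℕ => (W.map (↑) : Matrix n n ℂ) ^ t) atTop (𝓝 L) := by
    refine exists_tendsto_of_forall_exists_tendsto_mulVec fun v => ?_
    simpa only [← toLin'_pow, toLin'_apply] using
      Module.End.exists_tendsto_pow_apply (norm_map_ofReal_mulVec_le hW)
        (fun μ => eq_one_or_norm_lt_one_of_hasEigenvalue hW hdiag) v
  refine ⟨L.map Complex.re, ((continuous_id.matrix_map Complex.continuous_re).tendsto L).comp
    hL |>.congr fun t => ?_⟩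
  ext i j
  simp [← hpow]

end Matrix

/-- If `W` is a row-stochastic matrix (nonnegative, every row sums to `1`) with strictly
positive diagonal entries, then the matrix powers `W^t` converge entrywise as `t → ∞`;
in particular, for every vector `x`, the power iteration `W^t x` converges
(deterministically, to a limit depending only on `W` and `x`). -/
theorem stmt_9 {n : Type*} [Fintype n] [DecidableEq n]
    (W : Matrix n n ℝ) (hW : ∀ i j, 0 ≤ W i j) (hrow : ∀ i, ∑ j, W i j = 1)
    (hdiag : ∀ i, 0 < W i i) :
    (∃ L : Matrix n n ℝ, Filter.Tendsto (fun t : ℕ => W ^ t) Filter.atTop (nhds L)) ∧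
      ∀ x : n → ℝ, ∃ y : n → ℝ,
        Filter.Tendsto (fun t : ℕ => (W ^ t) *ᵥ x) Filter.atTop (nhds y) := by
  obtain ⟨L, hL⟩ := Matrix.exists_tendsto_pow_of_mem_rowStochastic
    (Matrix.mem_rowStochastic_iff_sum.mpr ⟨hW, hrow⟩) hdiag
  exact ⟨⟨L, hL⟩, fun x =>
    ⟨L *ᵥ x, ((continuous_id.matrix_mulVec continuous_const).tendsto L).comp hL⟩⟩
end

section
/- Let A ∈ ℝ^{n×n} be symmetric with eigendecomposition A = VΛV^T, where the eigenvalues are ordered by descending magnitude |λ_1| ≥ |λ_2| ≥ … ≥ |λ_n| and the columns v_i of V are orthonormal eigenvectors. Then for every k, the matrix A_k = Σ_{i=1}^{k} λ_i v_i v_i^T satisfies ‖A − A_k‖_F ≤ ‖A − B‖_F for every matrix B ∈ ℝ^{n×n} of rank at most k, i.e., the optimal low-rank approximation property also holds in the Frobenius norm. -/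
open scoped Matrix

attribute [local instance] Matrix.frobeniusNormedAddCommGroup

/-!
Bessel's inequality applied to the rows of a matrix `M` gives `∑ⱼ ‖M uⱼ‖² ≤ ‖M‖_F²` for
every orthonormal family `u`, with equality for an orthonormal basis. Take `u` an orthonormal
basis of `ker B`, which has at least `n - k` elements. Then
`‖A - B‖_F² ≥ ∑ⱼ ‖A uⱼ‖² = ∑ᵢ λᵢ² pᵢ` with weights `pᵢ = ∑ⱼ ⟪vᵢ, uⱼ⟫² ∈ [0, 1]` summing to
`dim ker B ≥ n - k`. As the `λᵢ²` decrease, such a weighted sum is at least the sum of the last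
`n - k` of them, which is `‖A - A_k‖_F²`.
-/

open Finset
open WithLp (toLp ofLp)

theorem Finset.sum_le_sum_mul_of_card_le_sum {ι : Type*} [DecidableEq ι] {s t : Finset ι}
    (hts : t ⊆ s) {e p : ι → ℝ} {c : ℝ} (hc : 0 ≤ c) (het : ∀ i ∈ t, e i ≤ c)
    (hes : ∀ i ∈ s \ t, c ≤ e i)
    (hp0 : ∀ i ∈ s, 0 ≤ p i) (hp1 : ∀ i ∈ s, p i ≤ 1) (hcard : (#t : ℝ) ≤ ∑ i ∈ s, p i) :
    ∑ i ∈ t, e i ≤ ∑ i ∈ s, e i * p i := by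
  calc ∑ i ∈ t, e i = ∑ i ∈ t, e i * p i + ∑ i ∈ t, e i * (1 - p i) := by
        rw [← sum_add_distrib]; simp only [mul_sub, mul_one, add_sub_cancel]
    _ ≤ ∑ i ∈ t, e i * p i + ∑ i ∈ t, c * (1 - p i) := by
        gcongr with i hi
        · linarith [hp1 i (hts hi)]
        · exact het i hi
    _ = ∑ i ∈ t, e i * p i + c * (#t - ∑ i ∈ t, p i) := by
        simp [← mul_sum, sum_sub_distrib]
    _ ≤ ∑ i ∈ t, e i * p i + c * ∑ i ∈ s \ t, p i := by
        gcongr; linarith [sum_sdiff hts (f := p)]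
    _ ≤ ∑ i ∈ t, e i * p i + ∑ i ∈ s \ t, e i * p i := by
        rw [mul_sum]; gcongr with i hi
        · exact hp0 i (sdiff_subset hi)
        · exact hes i hi
    _ = ∑ i ∈ s, e i * p i := by rw [add_comm, sum_sdiff hts]

theorem Fin.sum_compl_filter_lt_le_sum_mul {n k : ℕ} {e p : Fin n → ℝ} (he : Antitone e)
    (he0 : ∀ i, 0 ≤ e i) (hp0 : ∀ i, 0 ≤ p i) (hp1 : ∀ i, p i ≤ 1)
    (hcard : ((n - k : ℕ) : ℝ) ≤ ∑ i, p i) :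
    ∑ i ∈ (univ.filter fun i : Fin n => (i : ℕ) < k)ᶜ, e i ≤ ∑ i, e i * p i := by
  by_cases hk : k < n
  · refine sum_le_sum_mul_of_card_le_sum (subset_univ _) (he0 ⟨k, hk⟩) (fun i hi => he ?_)
      (fun i hi => he ?_) (fun i _ => hp0 i) (fun i _ => hp1 i) ?_
    · simpa [Fin.le_def] using hi
    · simpa [Fin.le_def] using (show (i : ℕ) < k by simpa using hi).le
    · rwa [card_compl, Fin.card_filter_val_lt, Fintype.card_fin, min_eq_right hk.le]
  · have hempty : (univ.filter fun i : Fin n => (i : ℕ) < k)ᶜ = ∅ := by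
      rw [compl_filter, filter_false_of_mem fun i _ => by have := i.isLt; omega]
    rw [hempty, sum_empty]
    exact sum_nonneg fun i _ => mul_nonneg (he0 i) (hp0 i)

section InnerProductSpace

variable {E ι κ : Type*} [NormedAddCommGroup E] [InnerProductSpace ℝ E] [Fintype ι] [Fintype κ]

theorem Orthonormal.sum_inner_sq_le_one {u : κ → E} (hu : Orthonormal ℝ u) {x : E}
    (hx : ‖x‖ = 1) : ∑ j, inner ℝ x (u j) ^ 2 ≤ 1 := by
  simpa [real_inner_comm, hx] using hu.sum_inner_products_le x (s := univ)

theorem OrthonormalBasis.sum_sum_inner_sq_eq_card (b : OrthonormalBasis ι ℝ E) {u : κ → E}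
    (hu : Orthonormal ℝ u) : ∑ i, ∑ j, inner ℝ (b i) (u j) ^ 2 = Fintype.card κ := by
  have hparseval : ∀ j, ∑ i, inner ℝ (b i) (u j) ^ 2 = 1 := fun j => by
    simpa [hu.1 j] using b.sum_sq_norm_inner_right (u j)
  rw [sum_comm]
  simp [hparseval]

theorem LinearMap.IsSymmetric.norm_sq_apply_eq_sum {T : E →ₗ[ℝ] E} (hT : T.IsSymmetric)
    (b : OrthonormalBasis ι ℝ E) {μ : ι → ℝ} (hTb : ∀ i, T (b i) = μ i • b i) (x : E) :
    ‖T x‖ ^ 2 = ∑ i, μ i ^ 2 * inner ℝ (b i) x ^ 2 := by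
  rw [← b.sum_sq_norm_inner_right]
  refine sum_congr rfl fun i _ => ?_
  rw [← hT, hTb, real_inner_smul_left, Real.norm_eq_abs, sq_abs, mul_pow]

end InnerProductSpace

namespace Matrix

section Frobenius

theorem frobenius_norm_sq_eq_sum_norm_sq_row {m n : Type*} [Fintype m] [Fintype n]
    (M : Matrix m n ℝ) :
    ‖M‖ ^ 2 = ∑ i, ‖toLp 2 (M i)‖ ^ 2 :=
  PiLp.norm_sq_eq_of_L2 _ (toLp 2 fun i => toLp 2 (M i))

variable {m n ι : Type*} [Fintype n] [DecidableEq n]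

theorem toEuclideanLin_apply_eq_inner (M : Matrix m n ℝ) (x : EuclideanSpace ℝ n) (i : m) :
    toEuclideanLin M x i = inner ℝ x (toLp 2 (M i)) := by
  simp [toLpLin_apply, EuclideanSpace.inner_eq_star_dotProduct, mulVec]

variable [Fintype m] [Fintype ι]

theorem sum_norm_sq_toEuclideanLin (M : Matrix m n ℝ) (u : ι → EuclideanSpace ℝ n) :
    ∑ j, ‖toEuclideanLin M (u j)‖ ^ 2 = ∑ i, ∑ j, ‖inner ℝ (u j) (toLp 2 (M i))‖ ^ 2 := by
  simp_rw [EuclideanSpace.norm_sq_eq, toEuclideanLin_apply_eq_inner]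
  exact sum_comm

theorem sum_norm_sq_toEuclideanLin_le_frobenius_norm_sq (M : Matrix m n ℝ)
    {u : ι → EuclideanSpace ℝ n} (hu : Orthonormal ℝ u) :
    ∑ j, ‖toEuclideanLin M (u j)‖ ^ 2 ≤ ‖M‖ ^ 2 := by
  rw [sum_norm_sq_toEuclideanLin, frobenius_norm_sq_eq_sum_norm_sq_row]
  gcongr with i
  exact hu.sum_inner_products_le _

theorem sum_norm_sq_toEuclideanLin_eq_frobenius_norm_sq (M : Matrix m n ℝ)
    (b : OrthonormalBasis ι ℝ (EuclideanSpace ℝ n)) :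
    ∑ j, ‖toEuclideanLin M (b j)‖ ^ 2 = ‖M‖ ^ 2 := by
  simp_rw [sum_norm_sq_toEuclideanLin, frobenius_norm_sq_eq_sum_norm_sq_row,
    b.sum_sq_norm_inner_right]

end Frobenius

theorem toEuclideanLin_vecMulVec {m n : Type*} [Fintype n] [DecidableEq n] (x : m → ℝ)
    (y : EuclideanSpace ℝ n) (z : EuclideanSpace ℝ n) :
    toEuclideanLin (vecMulVec x (ofLp y)) z = inner ℝ y z • toLp 2 x := by
  ext i
  simp [toLpLin_apply, vecMulVec_mulVec, EuclideanSpace.inner_eq_star_dotProduct, dotProduct_comm,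
    mul_comm]

theorem exists_orthonormal_ker_toEuclideanLin {m n : Type*} [Fintype m] [Fintype n]
    [DecidableEq n] (B : Matrix m n ℝ) :
    ∃ u : Fin (Fintype.card n - B.rank) → EuclideanSpace ℝ n,
      Orthonormal ℝ u ∧ ∀ j, toEuclideanLin B (u j) = 0 := by
  let K := LinearMap.ker (toEuclideanLin B)
  have hK : Module.finrank ℝ K = Fintype.card n - B.rank := by
    have hrank : B.rank = Module.finrank ℝ (LinearMap.range (toEuclideanLin B)) :=
      B.rank_eq_finrank_range_toLin (PiLp.basisFun 2 ℝ m) (PiLp.basisFun 2 ℝ n)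
    have := (toEuclideanLin B).finrank_range_add_finrank_ker
    rw [finrank_euclideanSpace, ← hrank] at this
    exact Nat.eq_sub_of_add_eq' this
  let ob := (stdOrthonormalBasis ℝ K).reindex (finCongr hK)
  exact ⟨fun j => ob j, ob.orthonormal.comp_linearIsometry K.subtypeₗᵢ, fun j => (ob j).2⟩

section Spectral

variable {n ι κ : Type*} [Fintype n] [DecidableEq n] [Fintype ι] [Fintype κ]
  (b : OrthonormalBasis ι ℝ (EuclideanSpace ℝ n)) {A : Matrix n n ℝ} {μ : ι → ℝ}

theorem frobenius_norm_sq_sub_sum_smul_vecMulVec [DecidableEq ι]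
    (hAb : ∀ i, toEuclideanLin A (b i) = μ i • b i) (s : Finset ι) :
    ‖A - ∑ i ∈ s, μ i • vecMulVec (ofLp (b i)) (ofLp (b i))‖ ^ 2 = ∑ i ∈ sᶜ, μ i ^ 2 := by
  have hb := orthonormal_iff_ite.mp b.orthonormal
  have hAkb : ∀ j, toEuclideanLin (A - ∑ i ∈ s, μ i • vecMulVec (ofLp (b i)) (ofLp (b i))) (b j)
      = if j ∈ s then 0 else μ j • b j := by
    intro j
    by_cases hj : j ∈ s <;> simp [hAb, toEuclideanLin_vecMulVec, hb, hj]
  rw [← sum_norm_sq_toEuclideanLin_eq_frobenius_norm_sq _ b]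
  simp only [hAkb]
  simp [apply_ite, norm_smul, b.orthonormal.1, sum_ite, ← compl_filter]

theorem sum_sq_mul_sum_inner_sq_le_frobenius_norm_sq_sub (hA : A.IsSymm)
    (hAb : ∀ i, toEuclideanLin A (b i) = μ i • b i) {B : Matrix n n ℝ}
    {u : κ → EuclideanSpace ℝ n} (hu : Orthonormal ℝ u) (hBu : ∀ j, toEuclideanLin B (u j) = 0) :
    ∑ i, μ i ^ 2 * ∑ j, inner ℝ (b i) (u j) ^ 2 ≤ ‖A - B‖ ^ 2 := by
  have hT : (toEuclideanLin A).IsSymmetric :=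
    isSymmetric_toEuclideanLin_iff.mpr (isHermitian_iff_isSymm.mpr hA)
  calc ∑ i, μ i ^ 2 * ∑ j, inner ℝ (b i) (u j) ^ 2
      = ∑ j, ‖toEuclideanLin A (u j)‖ ^ 2 := by
        simp_rw [hT.norm_sq_apply_eq_sum b hAb, mul_sum]
        exact sum_comm
    _ = ∑ j, ‖toEuclideanLin (A - B) (u j)‖ ^ 2 := by simp [hBu]
    _ ≤ ‖A - B‖ ^ 2 := sum_norm_sq_toEuclideanLin_le_frobenius_norm_sq _ hu

end Spectral

end Matrix

theorem EuclideanSpace.exists_orthonormalBasis_toLp {ι : Type*} [Fintype ι] [DecidableEq ι]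
    {v : ι → ι → ℝ} (hv : ∀ i j, v i ⬝ᵥ v j = if i = j then 1 else 0) :
    ∃ b : OrthonormalBasis ι ℝ (EuclideanSpace ℝ ι), ∀ i, b i = toLp 2 (v i) := by
  have hon : Orthonormal ℝ fun i => toLp 2 (v i) :=
    orthonormal_iff_ite.mpr fun i j => by
      rw [EuclideanSpace.inner_toLp_toLp, star_trivial, dotProduct_comm, hv]
  exact ⟨.mk hon (hon.linearIndependent.span_eq_top_of_card_eq_finrank' (by simp)).ge,
    fun i => by simp⟩

/-- Eckart–Young in the Frobenius norm: for a symmetric matrix `A` with orthonormal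
eigenvectors `v i` and eigenvalues `EV i` ordered by descending magnitude, the rank-`k`
spectral truncation `A_k = ∑_{i<k} EV i • v i (v i)ᵀ` satisfies
`‖A - A_k‖_F ≤ ‖A - B‖_F` for every matrix `B` of rank at most `k`,
where `‖·‖` is the Frobenius norm. -/
theorem stmt_11 {n : ℕ} (A : Matrix (Fin n) (Fin n) ℝ) (hA : A.IsSymm)
    (v : Fin n → Fin n → ℝ) (EV : Fin n → ℝ)
    (horth : ∀ i j, v i ⬝ᵥ v j = if i = j then (1 : ℝ) else 0)
    (heig : ∀ i, A *ᵥ v i = EV i • v i)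
    (horder : ∀ i j : Fin n, i ≤ j → |EV j| ≤ |EV i|) (k : ℕ) :
    ∀ B : Matrix (Fin n) (Fin n) ℝ, B.rank ≤ k →
      ‖A - ∑ i ∈ Finset.univ.filter (fun i : Fin n => (i : ℕ) < k),
          EV i • Matrix.vecMulVec (v i) (v i)‖ ≤ ‖A - B‖ := by
  intro B hB
  obtain ⟨b, hb⟩ := EuclideanSpace.exists_orthonormalBasis_toLp horth
  have hAb : ∀ i, Matrix.toEuclideanLin A (b i) = EV i • b i := fun i => by
    simp [hb, Matrix.toLpLin_apply, heig]
  obtain ⟨u, hu, hBu⟩ := B.exists_orthonormal_ker_toEuclideanLin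
  have hresidual := Matrix.frobenius_norm_sq_sub_sum_smul_vecMulVec b hAb
    (univ.filter fun i : Fin n => (i : ℕ) < k)
  simp only [hb] at hresidual
  rw [← sq_le_sq₀ (norm_nonneg _) (norm_nonneg _), hresidual]
  calc _ ≤ ∑ i, EV i ^ 2 * ∑ j, inner ℝ (b i) (u j) ^ 2 :=
        Fin.sum_compl_filter_lt_le_sum_mul (fun i j hij => sq_le_sq.mpr (horder i j hij))
          (fun i => sq_nonneg _) (fun i => by positivity)
          (fun i => hu.sum_inner_sq_le_one (b.orthonormal.1 i))
          (by rw [b.sum_sum_inner_sq_eq_card hu, Fintype.card_fin, Fintype.card_fin]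
              exact_mod_cast Nat.sub_le_sub_left hB n)
    _ ≤ ‖A - B‖ ^ 2 := Matrix.sum_sq_mul_sum_inner_sq_le_frobenius_norm_sq_sub b hA hAb hu hBu
end
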